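/- Let L be a finite-dimensional ω-Lie algebra over a field K of characteristic ≠ 2. If R : L → L is simultaneously a Rota-Baxter operator of weight 0 on L and an automorphism of L, then the inverse map R⁻¹ is a derivation of L (and an automorphism of L), i.e. R⁻¹ ∈ Der(L) ∩ Aut(L). -/
import Mathlib


/-- If `R` is simultaneously a Rota-Baxter operator of weight 0 and an
automorphism of a finite-dimensional ω-Lie algebra `L`, then `R⁻¹` is a derivation
(and an automorphism) of `L`. -/
theorem inv_of_rotaBaxter_aut_is_derivation
    {K : Type*} [Field K] (h2 : (2 : K) ≠ 0)
    {L : Type*} [AddCommGroup L] [Module K L] [FiniteDimensional K L]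
    (b : L →ₗ[K] L →ₗ[K] L) (ω : L →ₗ[K] L →ₗ[K] K)
    (hskew : ∀ x y : L, b x y = - b y x)
    (hωskew : ∀ x y : L, ω x y = - ω y x)
    (hjac : ∀ x y z : L, b (b x y) z + b (b y z) x + b (b z x) y
      = ω x y • z + ω y z • x + ω z x • y)
    (R : L ≃ₗ[K] L)
    (hRB : ∀ x y : L, b (R x) (R y) = R (b (R x) y + b x (R y)))
    (hAut : ∀ x y : L, R (b x y) = b (R x) (R y)) :
    (∀ x y : L, R.symm (b x y) = b (R.symm x) y + b x (R.symm y)) ∧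
    (∀ x y : L, R.symm (b x y) = b (R.symm x) (R.symm y)) := by
  have key : ∀ x y : L, b x y = b (R x) y + b x (R y) := by
    intro x y
    have h := (hRB x y).symm.trans (hAut x y).symm
    exact (R.injective h).symm
  have aut : ∀ x y : L, R.symm (b x y) = b (R.symm x) (R.symm y) := by
    intro x y
    have := hAut (R.symm x) (R.symm y)
    simp only [R.apply_symm_apply] at this
    simpa using congrArg R.symm this.symm
  refine ⟨fun x y => ?_, aut⟩
  rw [aut x y, key (R.symm x) (R.symm y)]
  simp [add_comm]
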